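/- The image of the derivation Δ = D_1 + x_1^{p-1}D_2 + ··· + x_1^{p-1}···x_{n-2}^{p-1}D_{n-1} acting on B_n is the k-span of the monomials x_1^{a_1}···x_n^{a_n} with (a_1,...,a_{n-1}) ≠ (p-1,...,p-1); in particular the image of Δ has codimension p in B_n. -/

import Mathlib

/-!
The monomials `x^a` with all `a_i < p` form a basis of `B_n`. On such a monomial `Δ` only sees
the first `i < n - 1` with `a_i ≠ 0`: the earlier `D_j` kill `x^a`, and each later term carries
the factor `x_i^{p-1} x_i^{a_i} = 0`. Hence `Δ x^a = a_i x^{a'}`, where `a'` replaces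
`a_1, …, a_{i-1}` by `p - 1` and lowers `a_i` by one, so `a'` is not `p - 1` on the first `n - 1`
coordinates. Conversely every monomial of that kind arises this way, with the coefficient
`a_i = a'_i + 1 < p`, a unit in `k`. The image of `Δ` is therefore spanned by all basis
monomials but the `p` monomials `x_1^{p-1} ⋯ x_{n-1}^{p-1} x_n^c`.
-/

open MvPolynomial Finset

section Monomials

variable {σ M : Type*} [Fintype σ]

theorem prod_pow_mul_prod_pow [CommMonoid M] (x : σ → M) (a b : σ → ℕ) :
    (∏ i, x i ^ a i) * ∏ i, x i ^ b i = ∏ i, x i ^ (a i + b i) := by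
  simp only [← prod_mul_distrib, pow_add]

theorem prod_pow_eq_zero [CommMonoidWithZero M] {p : ℕ} {x : σ → M} (hx : ∀ i, x i ^ p = 0)
    {a : σ → ℕ} {i : σ} (hi : p ≤ a i) : ∏ j, x j ^ a j = 0 :=
  prod_eq_zero (mem_univ i) (pow_eq_zero_of_le hi (hx i))

theorem prod_pow_update [CommMonoid M] [DecidableEq σ] (x : σ → M) (a : σ → ℕ) (i : σ) (m : ℕ) :
    ∏ j, x j ^ Function.update a i m j = x i ^ m * ∏ j ∈ univ.erase i, x j ^ a j := by
  rw [← mul_prod_erase univ _ (mem_univ i), Function.update_self]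
  congr 1
  exact prod_congr rfl fun j hj => by rw [Function.update_of_ne (ne_of_mem_erase hj)]

end Monomials

theorem Derivation.apply_prod_pow {σ k B : Type*} [Fintype σ] [DecidableEq σ] [CommSemiring k]
    [CommSemiring B] [Algebra k B] (D : Derivation k B B) {x : σ → B} {i : σ}
    (hD : ∀ j, D (x j) = if i = j then 1 else 0) (a : σ → ℕ) :
    D (∏ j, x j ^ a j) = a i • ∏ j, x j ^ Function.update a i (a i - 1) j := by
  have hrest : D (∏ j ∈ univ.erase i, x j ^ a j) = 0 := by
    refine prod_induction _ (fun b => D b = 0) (fun b c hb hc => ?_) D.map_one_eq_zero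
      fun j hj => ?_
    · rw [D.leibniz, hb, hc, smul_zero, smul_zero, add_zero]
    · rw [D.leibniz_pow, hD, if_neg (ne_of_mem_erase hj).symm, smul_zero, smul_zero]
  rw [← mul_prod_erase univ _ (mem_univ i), D.leibniz, hrest, D.leibniz_pow, hD, if_pos rfl,
    prod_pow_update, smul_zero, zero_add, nsmul_eq_mul, nsmul_eq_mul, smul_eq_mul, smul_eq_mul]
  ring

section Delta

variable {σ k B : Type*} [Fintype σ] [LinearOrder σ] [CommSemiring B] {x : σ → B} {p : ℕ}

theorem deltaDerivation_term_eq_zero (hx : ∀ i, x i ^ p = 0) {a : σ → ℕ} {i : σ}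
    (h : a i = 0 ∨ ∃ j < i, a j ≠ 0) :
    a i • ∏ j, x j ^ ((if j < i then p - 1 else 0) + Function.update a i (a i - 1) j) = 0 := by
  obtain h | ⟨j, hji, hj⟩ := h
  · rw [h, zero_smul]
  · rw [prod_pow_eq_zero hx (i := j) (by rw [if_pos hji, Function.update_of_ne hji.ne]; omega),
      smul_zero]

variable [LocallyFiniteOrderBot σ] [CommSemiring k] [Algebra k B]

def deltaDerivation (x : σ → B) (D : σ → Derivation k B B) (p : ℕ) (ℓ : σ) :
    Derivation k B B :=
  ∑ i ∈ Iio ℓ, (∏ j ∈ Iio i, x j ^ (p - 1)) • D i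

variable {D : σ → Derivation k B B} {ℓ : σ}

theorem prod_Iio_pow_eq (x : σ → B) (p : ℕ) (i : σ) :
    ∏ j ∈ Iio i, x j ^ (p - 1) = ∏ j, x j ^ (if j < i then p - 1 else 0) := by
  rw [← filter_gt_eq_Iio, prod_filter]
  exact prod_congr rfl fun j _ => by split_ifs <;> simp

theorem deltaDerivation_apply_prod_pow (hD : ∀ i j, D i (x j) = if i = j then 1 else 0)
    (a : σ → ℕ) :
    deltaDerivation x D p ℓ (∏ j, x j ^ a j) = ∑ i ∈ Iio ℓ, a i •
      ∏ j, x j ^ ((if j < i then p - 1 else 0) + Function.update a i (a i - 1) j) := by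
  rw [deltaDerivation, ← Derivation.coeFnAddMonoidHom_apply, map_sum, Finset.sum_apply]
  refine sum_congr rfl fun i _ => ?_
  rw [Derivation.coeFnAddMonoidHom_apply, Derivation.smul_apply, (D i).apply_prod_pow (hD i),
    prod_Iio_pow_eq, smul_comm, smul_eq_mul, prod_pow_mul_prod_pow]

theorem deltaDerivation_apply_prod_pow_of_isLeast (hx : ∀ i, x i ^ p = 0)
    (hD : ∀ i j, D i (x j) = if i = j then 1 else 0) {a : σ → ℕ} {i : σ} (hiℓ : i < ℓ)
    (hai : a i ≠ 0) (hlt : ∀ j < i, a j = 0) :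
    deltaDerivation x D p ℓ (∏ j, x j ^ a j) =
      a i • ∏ j, x j ^ (if j < i then p - 1 else Function.update a i (a i - 1) j) := by
  rw [deltaDerivation_apply_prod_pow hD, sum_eq_single_of_mem i (mem_Iio.2 hiℓ)]
  · refine congrArg (a i • ·) (prod_congr rfl fun j _ => ?_)
    split_ifs with hj
    · rw [Function.update_of_ne hj.ne, hlt j hj, add_zero]
    · rw [zero_add]
  · intro j _ hji
    refine deltaDerivation_term_eq_zero hx ?_
    rcases lt_or_gt_of_ne hji with hj | hj
    · exact .inl (hlt j hj)
    · exact .inr ⟨i, hj, hai⟩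

theorem deltaDerivation_apply_prod_pow_of_forall_eq_zero (hx : ∀ i, x i ^ p = 0)
    (hD : ∀ i j, D i (x j) = if i = j then 1 else 0) {a : σ → ℕ} (h : ∀ j < ℓ, a j = 0) :
    deltaDerivation x D p ℓ (∏ j, x j ^ a j) = 0 := by
  rw [deltaDerivation_apply_prod_pow hD]
  exact sum_eq_zero fun i hi => deltaDerivation_term_eq_zero hx (.inl (h i (mem_Iio.1 hi)))

theorem deltaDerivation_apply_prod_pow_mem_span (hx : ∀ i, x i ^ p = 0)
    (hD : ∀ i j, D i (x j) = if i = j then 1 else 0) (a : σ → ℕ) :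
    deltaDerivation x D p ℓ (∏ j, x j ^ a j) ∈ Submodule.span k
      ((fun a : σ → ℕ => ∏ j, x j ^ a j) '' {a | (∀ j, a j < p) ∧ ∃ j < ℓ, a j ≠ p - 1}) := by
  by_cases hbig : ∃ j, p ≤ a j
  · obtain ⟨j, hj⟩ := hbig
    rw [prod_pow_eq_zero hx hj, map_zero]
    exact zero_mem _
  push Not at hbig
  by_cases hzero : ∀ j < ℓ, a j = 0
  · rw [deltaDerivation_apply_prod_pow_of_forall_eq_zero hx hD hzero]
    exact zero_mem _
  push Not at hzero
  obtain ⟨i, ⟨hiℓ, hai⟩, hfirst⟩ := wellFounded_lt.has_min {i | i < ℓ ∧ a i ≠ 0} hzero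
  rw [deltaDerivation_apply_prod_pow_of_isLeast hx hD hiℓ hai fun j hj => by
    by_contra hne
    exact hfirst j ⟨hj.trans hiℓ, hne⟩ hj]
  refine Submodule.smul_of_tower_mem _ _
    (Submodule.subset_span ⟨_, ⟨fun j => ?_, i, hiℓ, ?_⟩, rfl⟩)
  · have := hbig j
    have := hbig i
    simp only [Function.update_apply]
    split_ifs <;> omega
  · have := hbig i
    simp only [lt_irrefl, if_false, Function.update_self]
    omega

end Delta

section Range

variable {σ k B : Type*} [Fintype σ] [LinearOrder σ] [LocallyFiniteOrderBot σ]
  [Field k] [CommRing B] [Algebra k B] {x : σ → B} {D : σ → Derivation k B B} {p : ℕ} {ℓ : σ}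

/-- The preimage of `x ^ c` zeroes the exponents of `c` below its first entry `i < ℓ` that is not
`p - 1`, and raises the `i`-th one by one. -/
theorem prod_pow_mem_range_deltaDerivation [CharP k p] (hx : ∀ i, x i ^ p = 0)
    (hD : ∀ i j, D i (x j) = if i = j then 1 else 0) {c : σ → ℕ} (hc : ∀ j, c j < p)
    (hcℓ : ∃ j < ℓ, c j ≠ p - 1) :
    ∏ j, x j ^ c j ∈ LinearMap.range (deltaDerivation x D p ℓ : B →ₗ[k] B) := by
  obtain ⟨i, ⟨hiℓ, hci⟩, hfirst⟩ := wellFounded_lt.has_min {i | i < ℓ ∧ c i ≠ p - 1} hcℓ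
  set b : σ → ℕ := fun j => if j < i then 0 else Function.update c i (c i + 1) j
  have hΔb : deltaDerivation x D p ℓ (∏ j, x j ^ b j) = (c i + 1) • ∏ j, x j ^ c j := by
    rw [deltaDerivation_apply_prod_pow_of_isLeast hx hD hiℓ (by simp) fun j hj => if_pos hj]
    congr 1
    · simp
    refine prod_congr rfl fun j _ => congrArg (x j ^ ·) ?_
    by_cases hji : j < i
    · rw [if_pos hji]
      by_contra hne
      exact hfirst j ⟨hji.trans hiℓ, Ne.symm hne⟩ hji
    · simp only [if_neg hji, Function.update_apply, lt_irrefl, if_false]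
      split_ifs with hj <;> simp [hj]
  have hunit : ((c i + 1 : ℕ) : k) ≠ 0 := by
    rw [Ne, CharP.cast_eq_zero_iff k p]
    exact Nat.not_dvd_of_pos_of_lt (Nat.succ_pos _) (by have := hc i; omega)
  refine ⟨((c i + 1 : ℕ) : k)⁻¹ • ∏ j, x j ^ b j, ?_⟩
  rw [LinearMap.map_smul, Derivation.coeFn_coe, hΔb, ← Nat.cast_smul_eq_nsmul k, smul_smul,
    inv_mul_cancel₀ hunit, one_smul]

theorem range_deltaDerivation [CharP k p] (hx : ∀ i, x i ^ p = 0)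
    (hD : ∀ i j, D i (x j) = if i = j then 1 else 0)
    (hspan : Submodule.span k (Set.range fun a : σ → ℕ => ∏ j, x j ^ a j) = ⊤) :
    LinearMap.range (deltaDerivation x D p ℓ : B →ₗ[k] B) = Submodule.span k
      ((fun a : σ → ℕ => ∏ j, x j ^ a j) '' {a | (∀ j, a j < p) ∧ ∃ j < ℓ, a j ≠ p - 1}) := by
  refine le_antisymm ?_ (Submodule.span_le.2 ?_)
  · rw [LinearMap.range_eq_map, ← hspan, Submodule.map_span, Submodule.span_le]
    rintro _ ⟨_, ⟨a, rfl⟩, rfl⟩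
    exact deltaDerivation_apply_prod_pow_mem_span hx hD a
  · rintro _ ⟨c, ⟨hc, hcℓ⟩, rfl⟩
    exact prod_pow_mem_range_deltaDerivation hx hD hc hcℓ

end Range

theorem Module.Basis.finrank_quotient_span_image {ι K V : Type*} [Finite ι] [DivisionRing K]
    [AddCommGroup V] [Module K V] (b : Module.Basis ι K V) (s : Set ι) :
    Module.finrank K (V ⧸ Submodule.span K (b '' s)) = sᶜ.ncard := by
  classical
  have : Module.Finite K V := Module.Finite.of_basis b
  have := Fintype.ofFinite ι
  have hspan : Module.finrank K (Submodule.span K (b '' s)) = s.ncard := by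
    have hli : LinearIndependent K fun i : s => b i :=
      b.linearIndependent.comp _ Subtype.val_injective
    rw [Set.image_eq_range, finrank_span_eq_card hli, Set.ncard_eq_toFinset_card',
      Set.toFinset_card]
  have := (Submodule.span K (b '' s)).finrank_quotient_add_finrank
  rw [hspan, Module.finrank_eq_card_basis b, ← Nat.card_eq_fintype_card,
    ← Set.ncard_add_ncard_compl s] at this
  omega

theorem Set.ncard_setOf_forall_ne_eq {σ α : Type*} [DecidableEq σ] (ℓ : σ) (c : α) :
    {a : σ → α | ∀ i ≠ ℓ, a i = c}.ncard = Nat.card α := by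
  have hrange : {a : σ → α | ∀ i ≠ ℓ, a i = c} = Set.range (Function.update (fun _ => c) ℓ) := by
    ext a
    refine ⟨fun ha => ⟨a ℓ, funext fun i => ?_⟩, ?_⟩
    · rcases eq_or_ne i ℓ with rfl | hi
      · exact Function.update_self ..
      · rw [Function.update_of_ne hi, ha i hi]
    · rintro ⟨v, rfl⟩ i hi
      exact Function.update_of_ne hi ..
  rw [hrange, Set.ncard_range_of_injective (Function.update_injective _ ℓ)]

section TruncatedPolynomial

variable {σ k B : Type*} [CommRing k] [CommRing B] [Algebra k B] {p : ℕ}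

theorem span_X_pow_eq_span_monomial :
    Ideal.span (Set.range fun i : σ => (X i : MvPolynomial σ k) ^ p) =
      Ideal.span ((fun s => monomial s (1 : k)) '' Set.range fun i => Finsupp.single i p) := by
  rw [← Set.range_comp]
  simp only [Function.comp_def, X_pow_eq_monomial]

theorem eq_zero_of_mem_restrictSupport_of_mem_span_X_pow {f : MvPolynomial σ k}
    (hf : f ∈ restrictSupport k {v | ∀ i, v i < p})
    (hI : f ∈ Ideal.span (Set.range fun i : σ => (X i : MvPolynomial σ k) ^ p)) : f = 0 := by
  rw [span_X_pow_eq_span_monomial, mem_ideal_span_monomial_image] at hI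
  refine support_eq_empty.1 (eq_empty_of_forall_notMem fun v hv => ?_)
  obtain ⟨_, ⟨i, rfl⟩, hle⟩ := hI v hv
  exact (hle i).not_gt (by simpa using hf hv i)

variable (e : (MvPolynomial σ k ⧸
    Ideal.span (Set.range fun i : σ => (X i : MvPolynomial σ k) ^ p)) ≃ₐ[k] B)
  {x : σ → B} (hx : ∀ j, x j = e (Ideal.Quotient.mk _ (X j)))
include hx

theorem pow_eq_zero_of_truncated (i : σ) : x i ^ p = 0 := by
  rw [hx, ← map_pow, ← map_pow, Ideal.Quotient.eq_zero_iff_mem.2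
    (Ideal.subset_span (Set.mem_range_self i)), map_zero]

variable [Fintype σ]

theorem apply_mk_monomial_one (v : σ →₀ ℕ) :
    e (Ideal.Quotient.mk _ (monomial v 1)) = ∏ i, x i ^ v i := by
  rw [monomial_eq, C_1, one_mul, Finsupp.prod_fintype _ _ fun _ => pow_zero _, map_prod, map_prod]
  simp only [map_pow, hx]

theorem span_truncatedMonomials_eq_top :
    Submodule.span k (Set.range fun a : σ → Fin p => ∏ i, x i ^ (a i : ℕ)) = ⊤ := by
  let π := e.toLinearMap ∘ₗ (Ideal.Quotient.mkₐ k _).toLinearMap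
  have hπ : LinearMap.range π = ⊤ :=
    LinearMap.range_eq_top.2 (e.surjective.comp Ideal.Quotient.mk_surjective)
  rw [eq_top_iff, ← hπ, LinearMap.range_eq_map, ← (basisMonomials σ k).span_eq, Submodule.map_span,
    Submodule.span_le]
  rintro _ ⟨_, ⟨v, rfl⟩, rfl⟩
  have hv : π (monomial v 1) = ∏ i, x i ^ v i := apply_mk_monomial_one e hx v
  rw [coe_basisMonomials, SetLike.mem_coe, hv]
  by_cases hbig : ∃ i, p ≤ v i
  · obtain ⟨i, hi⟩ := hbig
    rw [prod_pow_eq_zero (pow_eq_zero_of_truncated e hx) hi]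
    exact zero_mem _
  · push Not at hbig
    exact Submodule.subset_span ⟨fun i => ⟨v i, hbig i⟩, rfl⟩

theorem span_prod_pow_eq_top :
    Submodule.span k (Set.range fun a : σ → ℕ => ∏ i, x i ^ a i) = ⊤ :=
  eq_top_mono (Submodule.span_mono (Set.range_comp_subset_range _ _))
    (span_truncatedMonomials_eq_top e hx)

theorem linearIndependent_truncatedMonomials :
    LinearIndependent k fun a : σ → Fin p => ∏ i, x i ^ (a i : ℕ) := by
  let π := e.toLinearMap ∘ₗ (Ideal.Quotient.mkₐ k _).toLinearMap
  let m : (σ → Fin p) → MvPolynomial σ k :=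
    fun a => monomial (Finsupp.equivFunOnFinite.symm fun i => (a i : ℕ)) 1
  have hm : LinearIndependent k m := by
    refine (basisMonomials σ k).linearIndependent.comp _ fun a b hab => funext fun i => ?_
    exact Fin.ext (congrFun (Finsupp.equivFunOnFinite.symm.injective hab) i)
  have hdisj : Disjoint (Submodule.span k (Set.range m)) (LinearMap.ker π) := by
    refine Submodule.disjoint_def.2 fun f hf hker => ?_
    refine eq_zero_of_mem_restrictSupport_of_mem_span_X_pow (p := p) ?_ ?_
    · refine Submodule.span_le.2 ?_ hf
      rintro _ ⟨a, rfl⟩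
      simp [m]
    · simpa [π, Ideal.Quotient.eq_zero_iff_mem] using hker
  have hπm : ⇑π ∘ m = fun a => ∏ i, x i ^ (a i : ℕ) :=
    funext fun a => (apply_mk_monomial_one e hx _).trans (by simp)
  exact hπm ▸ hm.map hdisj

noncomputable def truncatedBasis : Module.Basis (σ → Fin p) k B :=
  Module.Basis.mk (linearIndependent_truncatedMonomials e hx)
    (span_truncatedMonomials_eq_top e hx).ge

theorem truncatedBasis_apply (a : σ → Fin p) :
    truncatedBasis e hx a = ∏ i, x i ^ (a i : ℕ) :=
  Module.Basis.mk_apply ..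

theorem image_prod_pow_eq_image_truncatedBasis (P : (σ → ℕ) → Prop) :
    (fun a : σ → ℕ => ∏ i, x i ^ a i) '' {a | (∀ i, a i < p) ∧ P a} =
      truncatedBasis e hx '' {a | P fun i => a i} := by
  ext m
  simp only [Set.mem_image, Set.mem_ofPred_eq, truncatedBasis_apply]
  constructor
  · rintro ⟨a, ⟨ha, hPa⟩, rfl⟩
    exact ⟨fun i => ⟨a i, ha i⟩, hPa, rfl⟩
  · rintro ⟨a, hPa, rfl⟩
    exact ⟨fun i => a i, ⟨fun i => (a i).isLt, hPa⟩, rfl⟩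

end TruncatedPolynomial

theorem finrank_quotient_range_deltaDerivation {σ k B : Type*} [Fintype σ] [LinearOrder σ]
    [LocallyFiniteOrderBot σ] [Field k] [CommRing B] [Algebra k B] {p : ℕ} [CharP k p]
    (hp : 0 < p)
    (e : (MvPolynomial σ k ⧸
      Ideal.span (Set.range fun i : σ => (X i : MvPolynomial σ k) ^ p)) ≃ₐ[k] B)
    {x : σ → B} (hx : ∀ j, x j = e (Ideal.Quotient.mk _ (X j))) {D : σ → Derivation k B B}
    (hD : ∀ i j, D i (x j) = if i = j then 1 else 0) {ℓ : σ} (hℓ : IsTop ℓ) :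
    Module.finrank k (B ⧸ LinearMap.range (deltaDerivation x D p ℓ : B →ₗ[k] B)) = p := by
  have hcompl : {a : σ → Fin p | ∃ j < ℓ, (a j : ℕ) ≠ p - 1}ᶜ =
      {a | ∀ j ≠ ℓ, a j = ⟨p - 1, by omega⟩} := by
    ext a
    simp [← (hℓ _).lt_iff_ne, Fin.ext_iff]
  rw [range_deltaDerivation (pow_eq_zero_of_truncated e hx) hD (span_prod_pow_eq_top e hx),
    image_prod_pow_eq_image_truncatedBasis e hx (fun a => ∃ j < ℓ, a j ≠ p - 1),
    Module.Basis.finrank_quotient_span_image, hcompl, Set.ncard_setOf_forall_ne_eq,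
    Nat.card_eq_fintype_card, Fintype.card_fin]

theorem sum_castLE_eq_deltaDerivation {k B : Type*} [CommRing k] [CommRing B] [Algebra k B]
    {n : ℕ} (h : n - 1 ≤ n) (x : Fin n → B) (D : Fin n → Derivation k B B) (p : ℕ) {ℓ : Fin n}
    (hℓ : (ℓ : ℕ) = n - 1) :
    ∑ i : Fin (n - 1), (∏ j ∈ univ.filter (· < i), x (Fin.castLE h j) ^ (p - 1)) •
      D (Fin.castLE h i) = deltaDerivation x D p ℓ := by
  have hIio : univ.map (Fin.castLEEmb h) = Iio ℓ := by
    ext j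
    simp only [mem_map, mem_univ, true_and, Fin.castLEEmb_apply, mem_Iio, Fin.lt_def, hℓ]
    exact ⟨fun ⟨i, hi⟩ => hi ▸ i.isLt, fun hj => ⟨⟨j, hj⟩, rfl⟩⟩
  rw [deltaDerivation, ← hIio, sum_map]
  refine sum_congr rfl fun i _ => ?_
  rw [filter_gt_eq_Iio, Fin.castLEEmb_apply, ← Fin.map_castLEEmb_Iio, prod_map]
  rfl

/-- The image of `Δ = D_1 + x_1^{p-1}D_2 + ⋯ + x_1^{p-1}⋯x_{n-2}^{p-1}D_{n-1}` acting on `B_n`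
is the `k`-span of the monomials `x_1^{a_1}⋯x_n^{a_n}` with `(a_1,...,a_{n-1}) ≠ (p-1,...,p-1)`;
in particular the image of `Δ` has codimension `p` in `B_n`. -/
theorem image_of_Delta
    (k : Type*) [Field k] (p n : ℕ) [Fact (Nat.Prime p)] [CharP k p]
    (B : Type*) [CommRing B] [Algebra k B]
    (e : (MvPolynomial (Fin n) k ⧸
        Ideal.span (Set.range fun i : Fin n => (X i : MvPolynomial (Fin n) k) ^ p)) ≃ₐ[k] B)
    (x : Fin n → B) (hx : ∀ j, x j = e (Ideal.Quotient.mk _ (X j)))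
    (D : Fin n → Derivation k B B) (hD : ∀ i j, D i (x j) = if i = j then 1 else 0)
    (ℓ : Fin n) (hℓ : (ℓ : ℕ) = n - 1)
    (Δ : Derivation k B B)
    (hΔ : Δ = ∑ i : Fin (n - 1),
      (∏ j ∈ Finset.univ.filter (fun j : Fin (n - 1) => j < i),
          x (Fin.castLE (by omega : n - 1 ≤ n) j) ^ (p - 1)) •
        D (Fin.castLE (by omega : n - 1 ≤ n) i)) :
    LinearMap.range (Δ : B →ₗ[k] B) =
        Submodule.span k {m : B | ∃ a : Fin n → ℕ, (∀ i, a i < p) ∧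
          (∃ i, i ≠ ℓ ∧ a i ≠ p - 1) ∧ m = ∏ i, x i ^ a i} ∧
      Module.finrank k (B ⧸ LinearMap.range (Δ : B →ₗ[k] B)) = p := by
  have hℓ_top : IsTop ℓ := fun i => Fin.le_def.2 (by omega)
  rw [hΔ, sum_castLE_eq_deltaDerivation _ x D p hℓ]
  refine ⟨?_, finrank_quotient_range_deltaDerivation (Fact.out : p.Prime).pos e hx hD hℓ_top⟩
  rw [range_deltaDerivation (pow_eq_zero_of_truncated e hx) hD (span_prod_pow_eq_top e hx)]
  congr 1
  ext m
  simp [← (hℓ_top _).lt_iff_ne, eq_comm, and_assoc]
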